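/- arXiv:1912.07948 — 4 statements merged into one kernel-verified Lean document; each statement's English description precedes it below -/
import Mathlib

section
/- Let p be the n×M concentration matrix with rows p_j, Γ = p^T p invertible, a = p Γ^{-1}, and let p_{i-} be p with the i-th row replaced by zero, Γ_{i-} = p_{i-}^T p_{i-} invertible, a_{i-} = p_{i-} Γ_{i-}^{-1}. Let Ξ be the n×d data matrix with rows ξ_j^T, and Ξ_{i-} be Ξ with the i-th row replaced by zero. Define ξ̄̄ = a^T Ξ = Γ^{-1} p^T Ξ and ξ̄̄_{i-} = Γ_{i-}^{-1} p_{i-}^T Ξ_{i-}. If h_i = p_i^T Γ^{-1} p_i ≠ 1, then ξ̄̄_{i-} = ξ̄̄ + (1/(1−h_i)) a_i (p_i^T ξ̄̄ − ξ_i^T), where a_i = Γ^{-1} p_i is the i-th row of a written as a column vector. -/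
open Matrix

/-!
Deleting the `i`-th observation downdates `Γ` to `Γ - pᵢ pᵢᵀ` and `pᵀ Ξ` to `pᵀ Ξ - pᵢ ξᵢᵀ`.
Since `Γ aᵢ = pᵢ`, the downdated Gram matrix sends `aᵢ` to `(1 - hᵢ) pᵢ`; with this one checks
directly that the proposed right-hand side solves `Γ_{i-} X = p_{i-}ᵀ Ξ_{i-}`
(a Sherman–Morrison argument that never inverts `Γ_{i-}`).
-/

namespace Matrix

variable {l m n k K α : Type*}

theorem transpose_updateRow_zero_mul_updateRow_zero [Fintype l] [DecidableEq l]
    [NonUnitalNonAssocRing α] (A : Matrix l m α) (B : Matrix l n α) (i : l) :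
    (updateRow A i 0)ᵀ * updateRow B i 0 = Aᵀ * B - vecMulVec (A i) (B i) := by
  ext r c
  simp only [mul_apply, transpose_apply, sub_apply, vecMulVec_apply,
    ← Finset.add_sum_erase _ _ (Finset.mem_univ i), updateRow_self, Pi.zero_apply, mul_zero,
    zero_add, add_sub_cancel_left]
  refine Finset.sum_congr rfl fun j hj => ?_
  rw [updateRow_ne (Finset.ne_of_mem_erase hj), updateRow_ne (Finset.ne_of_mem_erase hj)]

theorem sub_vecMulVec_mul_add_smul_vecMulVec [Fintype m] [Field K] {Γ : Matrix m m K}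
    {X B : Matrix m k K} {a u : m → K} (u' : m → K) (v : k → K) (hX : Γ * X = B)
    (ha : Γ *ᵥ a = u) (h : u' ⬝ᵥ a ≠ 1) :
    (Γ - vecMulVec u u') * (X + (1 / (1 - u' ⬝ᵥ a)) • vecMulVec a (u' ᵥ* X - v)) =
      B - vecMulVec u v := by
  have hu : (Γ - vecMulVec u u') *ᵥ a = (1 - u' ⬝ᵥ a) • u := by
    rw [sub_mulVec, ha, vecMulVec_mulVec, op_smul_eq_smul, sub_smul, one_smul]
  rw [Matrix.mul_add, Matrix.mul_smul, mul_vecMulVec, hu, smul_vecMulVec, smul_smul,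
    one_div_mul_cancel (sub_ne_zero.mpr h.symm), one_smul, Matrix.sub_mul, hX, vecMulVec_mul,
    vecMulVec_sub]
  abel

end Matrix

/-- Leave-one-out update formula (Eq. 10) for the weighted component means
in the mixture with varying concentrations model. -/
theorem leave_one_out_update
    {n M d : ℕ} (p : Matrix (Fin n) (Fin M) ℝ) (Ξ : Matrix (Fin n) (Fin d) ℝ)
    (i : Fin n)
    (pim : Matrix (Fin n) (Fin M) ℝ) (hpim : pim = updateRow p i 0)
    (Ξim : Matrix (Fin n) (Fin d) ℝ) (hΞim : Ξim = updateRow Ξ i 0)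
    (Γ : Matrix (Fin M) (Fin M) ℝ) (hΓ : Γ = pᵀ * p) (hΓunit : IsUnit Γ.det)
    (Γim : Matrix (Fin M) (Fin M) ℝ) (hΓim : Γim = pimᵀ * pim)
    (hΓimunit : IsUnit Γim.det)
    (ξbar : Matrix (Fin M) (Fin d) ℝ) (hξbar : ξbar = Γ⁻¹ * pᵀ * Ξ)
    (ξbarim : Matrix (Fin M) (Fin d) ℝ) (hξbarim : ξbarim = Γim⁻¹ * pimᵀ * Ξim)
    (hi : ℝ) (hhi : hi = p i ⬝ᵥ Γ⁻¹.mulVec (p i)) (hhi1 : hi ≠ 1)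
    (ai : Fin M → ℝ) (hai : ai = Γ⁻¹.mulVec (p i)) :
    ξbarim = ξbar + (1 / (1 - hi)) • vecMulVec ai (p i ᵥ* ξbar - Ξ i) := by
  have hΓξ : Γ * ξbar = pᵀ * Ξ := by
    rw [hξbar, Matrix.mul_assoc, mul_nonsing_inv_cancel_left _ _ hΓunit]
  have hΓai : Γ *ᵥ ai = p i := by
    rw [hai, mulVec_mulVec, mul_nonsing_inv _ hΓunit, one_mulVec]
  have hΓim' : Γim = Γ - vecMulVec (p i) (p i) := by
    rw [hΓim, hpim, hΓ, transpose_updateRow_zero_mul_updateRow_zero]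
  obtain rfl : hi = p i ⬝ᵥ ai := hai ▸ hhi
  rw [hξbarim, Matrix.mul_assoc, hpim, hΞim, transpose_updateRow_zero_mul_updateRow_zero,
    ← sub_vecMulVec_mul_add_smul_vecMulVec (p i) (Ξ i) hΓξ hΓai hhi1, ← hΓim',
    nonsing_inv_mul_cancel_left _ _ hΓimunit]
end

section
/- Assume det Γ_∞ > 0 where (1/n)Γ_{;n} → Γ_∞ for the Gram matrices Γ_{;n} = p^T p of concentration matrices p with entries in [0,1]. Then the minimax weights a_{j;n}^{(m)} (entries of a = p Γ_{;n}^{-1}) satisfy sup_{j=1,...,n; m=1,...,M} |a_{j;n}^{(m)}| = O(n^{-1}) as n → ∞. -/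
open Matrix Filter
open scoped BigOperators Topology

/-- Lemma 1(1): the minimax weights `a = p Γ⁻¹` are uniformly `O(n⁻¹)`. -/
theorem minimax_weights_O_inv_n
    {M : ℕ} (p : (n : ℕ) → Matrix (Fin n) (Fin M) ℝ)
    (hp : ∀ n j m, p n j m ∈ Set.Icc (0 : ℝ) 1)
    (Γ : (n : ℕ) → Matrix (Fin M) (Fin M) ℝ) (hΓ : ∀ n, Γ n = (p n)ᵀ * p n)
    (Γinf : Matrix (Fin M) (Fin M) ℝ)
    (hlim : Tendsto (fun n : ℕ => ((n : ℝ)⁻¹) • Γ n) atTop (𝓝 Γinf))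
    (hdet : 0 < Γinf.det) :
    ∃ C : ℝ, ∀ᶠ n in atTop, ∀ (j : Fin n) (m : Fin M),
      |(p n * (Γ n)⁻¹) j m| ≤ C / n := by
  -- entrywise bound on the limiting inverse
  set C0 : ℝ := 1 + ∑ k : Fin M, ∑ m : Fin M, |Γinf⁻¹ k m| with hC0
  have hC0entry : ∀ k m : Fin M, |Γinf⁻¹ k m| + 1 ≤ C0 := by
    intro k m
    have h1 : |Γinf⁻¹ k m| ≤ ∑ k : Fin M, ∑ m : Fin M, |Γinf⁻¹ k m| := by
      calc |Γinf⁻¹ k m| ≤ ∑ m : Fin M, |Γinf⁻¹ k m| :=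
              Finset.single_le_sum (f := fun m => |Γinf⁻¹ k m|)
                (fun i _ => abs_nonneg _) (Finset.mem_univ m)
        _ ≤ ∑ k : Fin M, ∑ m : Fin M, |Γinf⁻¹ k m| :=
              Finset.single_le_sum (f := fun k => ∑ m : Fin M, |Γinf⁻¹ k m|)
                (fun i _ => Finset.sum_nonneg fun _ _ => abs_nonneg _) (Finset.mem_univ k)
    rw [hC0]; linarith
  -- continuity of matrix inverse at Γinf
  have hUnit : IsUnit Γinf.det := isUnit_iff_ne_zero.2 hdet.ne'
  have hcont : ContinuousAt Inv.inv Γinf :=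
    continuousAt_matrix_inv Γinf (NormedRing.inverse_continuousAt hUnit.unit)
  have hBlim : Tendsto (fun n : ℕ => ((n : ℝ)⁻¹ • Γ n)⁻¹) atTop (𝓝 Γinf⁻¹) :=
    hcont.tendsto.comp hlim
  -- determinant converges
  have hdetlim : Tendsto (fun n : ℕ => ((n : ℝ)⁻¹ • Γ n).det) atTop (𝓝 Γinf.det) :=
    (Continuous.matrix_det continuous_id).continuousAt.tendsto.comp hlim
  have hdetpos : ∀ᶠ n : ℕ in atTop, 0 < ((n : ℝ)⁻¹ • Γ n).det :=
    hdetlim.eventually (eventually_gt_nhds hdet)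
  -- entrywise eventual bound on B n := ((n:ℝ)⁻¹ • Γ n)⁻¹
  have hBbound : ∀ᶠ n : ℕ in atTop, ∀ k m : Fin M,
      |((((n : ℝ)⁻¹ • Γ n)⁻¹)) k m| ≤ C0 := by
    rw [eventually_all]
    intro k
    rw [eventually_all]
    intro m
    have hentry : Tendsto (fun n : ℕ => (((n : ℝ)⁻¹ • Γ n)⁻¹) k m) atTop (𝓝 (Γinf⁻¹ k m)) :=
      ((continuous_id.matrix_elem k m).continuousAt.tendsto).comp hBlim
    have := hentry.eventually (eventually_abs_sub_lt (Γinf⁻¹ k m) one_pos)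
    filter_upwards [this] with n hn
    have h2 : |(((n : ℝ)⁻¹ • Γ n)⁻¹) k m| < |Γinf⁻¹ k m| + 1 := by
      have := abs_sub_abs_le_abs_sub ((((n : ℝ)⁻¹ • Γ n)⁻¹) k m) (Γinf⁻¹ k m)
      linarith
    linarith [hC0entry k m]
  refine ⟨(M : ℝ) * C0, ?_⟩
  filter_upwards [hdetpos, hBbound, eventually_ge_atTop 1] with n hdn hBn hn1
  intro j m
  have hnpos : (0 : ℝ) < (n : ℝ) := by exact_mod_cast hn1
  -- Γ n is invertible
  have hdetΓ : IsUnit (Γ n).det := by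
    refine isUnit_iff_ne_zero.2 fun h => ?_
    rw [Matrix.det_smul, h, mul_zero] at hdn
    exact lt_irrefl _ hdn
  -- (Γ n)⁻¹ = (n:ℝ)⁻¹ • ((n:ℝ)⁻¹ • Γ n)⁻¹
  have hinv : (Γ n)⁻¹ = (n : ℝ)⁻¹ • ((n : ℝ)⁻¹ • Γ n)⁻¹ := by
    have hne : ((n : ℝ)⁻¹) ≠ 0 := inv_ne_zero hnpos.ne'
    set u : ℝˣ := Units.mk0 ((n : ℝ)⁻¹) hne with hu
    have h3 := Matrix.inv_smul' (Γ n) u hdetΓ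
    have h4 : (u • Γ n) = (n : ℝ)⁻¹ • Γ n := by
      ext i k; simp [hu, Units.smul_def]
    rw [h4] at h3
    rw [h3]
    have h5 : ((u⁻¹ : ℝˣ) : ℝ) = (n : ℝ) := by simp [hu]
    rw [Units.smul_def, h5, smul_smul, inv_mul_cancel₀ hnpos.ne', one_smul]
  rw [hinv]
  have hexp : (p n * ((n : ℝ)⁻¹ • ((n : ℝ)⁻¹ • Γ n)⁻¹)) j m
      = (n : ℝ)⁻¹ * ∑ k : Fin M, p n j k * (((n : ℝ)⁻¹ • Γ n)⁻¹) k m := by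
    simp [Matrix.mul_apply, Finset.mul_sum, Matrix.smul_apply]
    ring_nf
    congr 1
    ext k
    ring
  rw [hexp, abs_mul, abs_of_pos (inv_pos.2 hnpos)]
  have hsum : |∑ k : Fin M, p n j k * (((n : ℝ)⁻¹ • Γ n)⁻¹) k m| ≤ (M : ℝ) * C0 := by
    calc |∑ k : Fin M, p n j k * (((n : ℝ)⁻¹ • Γ n)⁻¹) k m|
        ≤ ∑ k : Fin M, |p n j k * (((n : ℝ)⁻¹ • Γ n)⁻¹) k m| :=
          Finset.abs_sum_le_sum_abs _ _
      _ ≤ ∑ k : Fin M, C0 := by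
          refine Finset.sum_le_sum fun k _ => ?_
          rw [abs_mul]
          have hpk := hp n j k
          have h0 : |p n j k| ≤ 1 := by
            rw [abs_of_nonneg hpk.1]; exact hpk.2
          have hC0nonneg : (0 : ℝ) ≤ C0 := le_trans (by positivity) (hC0entry m m)
          calc |p n j k| * |(((n : ℝ)⁻¹ • Γ n)⁻¹) k m|
              ≤ 1 * C0 := mul_le_mul h0 (hBn k m) (abs_nonneg _) zero_le_one
            _ = C0 := one_mul _
      _ = (M : ℝ) * C0 := by simp [Finset.sum_const, mul_comm]
  calc (n : ℝ)⁻¹ * |∑ k : Fin M, p n j k * (((n : ℝ)⁻¹ • Γ n)⁻¹) k m|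
      ≤ (n : ℝ)⁻¹ * ((M : ℝ) * C0) := by
        exact mul_le_mul_of_nonneg_left hsum (le_of_lt (inv_pos.2 hnpos))
    _ = (M : ℝ) * C0 / n := by ring
end

section
/- Assume det Γ_∞ > 0 where (1/n)Γ_{;n} → Γ_∞. Let a = p Γ^{-1} and, for each i, let a_{i-} = p_{i-} Γ_{i-}^{-1} be the weights computed after zeroing out the i-th row of p. Then sup over i ≠ j and m of |a_{j;n}^{(m)} − a_{j i-;n}^{(m)}| = O(n^{-2}) as n → ∞. In particular, the difference of weights equals (1/(1−h_i)) Γ^{-1} p_i p_i^T Γ^{-1} p_j componentwise, where h_i = p_i^T Γ^{-1} p_i. -/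
/-!
Deleting the `i`-th row of `p` lowers `Γ` by the rank-one matrix `pᵢ pᵢᵀ`, so by the
Sherman–Morrison formula the `j`-th row of the weights moves by
`(1 - hᵢ)⁻¹ Γ⁻¹ pᵢ pᵢᵀ Γ⁻¹ pⱼ = (1 - hᵢ)⁻¹ (pᵢᵀ Γ⁻¹ pⱼ) Γ⁻¹ pᵢ`.
Since `Γ / n` tends to an invertible matrix, `‖Γ⁻¹‖ = O(1/n)`; as the rows of `p` have sup norm
at most one, `hᵢ = O(1/n)` and the correction is `O(‖Γ⁻¹‖²) = O(1/n²)`, uniformly in `i`, `j`, `m`.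
-/

open Matrix Filter
open scoped BigOperators Topology

namespace Matrix

variable {m ι : Type*}

theorem transpose_updateRow_zero_mul_self {R : Type*} [CommRing R] [Fintype m] [DecidableEq m]
    (P : Matrix m ι R) (i : m) :
    (updateRow P i 0)ᵀ * updateRow P i 0 = Pᵀ * P - vecMulVec (P i) (P i) := by
  ext k l
  simp only [mul_apply, transpose_apply, sub_apply, vecMulVec_apply]
  rw [eq_sub_iff_add_eq, ← Finset.sum_erase_add _ _ (Finset.mem_univ i),
    ← Finset.sum_erase_add _ _ (Finset.mem_univ i)]
  simp only [updateRow_self, Pi.zero_apply, zero_mul, add_zero]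
  congr 1
  exact Finset.sum_congr rfl fun j hj => by rw [updateRow_ne (Finset.ne_of_mem_erase hj)]

theorem mul_vecMulVec_mul_mulVec {R : Type*} [CommRing R] [Fintype ι] (A B : Matrix ι ι R)
    (u v w : ι → R) : (A * vecMulVec u v * B) *ᵥ w = (v ⬝ᵥ B *ᵥ w) • (A *ᵥ u) := by
  rw [mul_vecMulVec, vecMulVec_mul, vecMulVec_mulVec, op_smul_eq_smul, dotProduct_mulVec]

theorem inv_sub_vecMulVec {𝕜 : Type*} [Field 𝕜] [Fintype ι] [DecidableEq ι] (A : Matrix ι ι 𝕜)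
    (u v : ι → 𝕜) (hA : IsUnit A.det) (h : v ⬝ᵥ A⁻¹ *ᵥ u ≠ 1) :
    (A - vecMulVec u v)⁻¹ =
      A⁻¹ + (1 / (1 - v ⬝ᵥ A⁻¹ *ᵥ u)) • (A⁻¹ * vecMulVec u v * A⁻¹) := by
  refine inv_eq_right_inv ?_
  have hV : vecMulVec u v * (A⁻¹ * vecMulVec u v * A⁻¹) =
      (v ⬝ᵥ A⁻¹ *ᵥ u) • (vecMulVec u v * A⁻¹) := by
    rw [← Matrix.mul_assoc, ← Matrix.mul_assoc, vecMulVec_mul, vecMulVec_mul_vecMulVec,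
      ← dotProduct_mulVec, vecMulVec_smul, smul_mul, vecMulVec_mul]
  rw [Matrix.sub_mul, Matrix.mul_add, Matrix.mul_add, mul_nonsing_inv _ hA, Matrix.mul_smul,
    Matrix.mul_smul, ← Matrix.mul_assoc A, ← Matrix.mul_assoc A, mul_nonsing_inv _ hA,
    Matrix.one_mul, hV, smul_smul, add_sub_add_comm, ← sub_smul, ← mul_one_sub,
    one_div_mul_cancel (sub_ne_zero.mpr h.symm), one_smul, sub_add_cancel]

section linftyOpNorm

open scoped Norms.Operator

variable [Fintype ι]

theorem abs_dotProduct_le (x y : ι → ℝ) : |x ⬝ᵥ y| ≤ Fintype.card ι * ‖x‖ * ‖y‖ :=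
  calc |x ⬝ᵥ y| ≤ ∑ k, |x k * y k| := Finset.abs_sum_le_sum_abs _ _
    _ ≤ ∑ _k : ι, ‖x‖ * ‖y‖ := Finset.sum_le_sum fun k _ => by
        rw [abs_mul]
        exact mul_le_mul (norm_le_pi_norm x k) (norm_le_pi_norm y k) (abs_nonneg _)
          (norm_nonneg _)
    _ = Fintype.card ι * ‖x‖ * ‖y‖ := by simp [mul_assoc]

theorem abs_dotProduct_mulVec_le (A : Matrix ι ι ℝ) {u v : ι → ℝ} (hu : ‖u‖ ≤ 1)
    (hv : ‖v‖ ≤ 1) : |u ⬝ᵥ A *ᵥ v| ≤ Fintype.card ι * ‖A‖ :=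
  calc |u ⬝ᵥ A *ᵥ v| ≤ Fintype.card ι * ‖u‖ * ‖A *ᵥ v‖ := abs_dotProduct_le _ _
    _ ≤ Fintype.card ι * 1 * (‖A‖ * 1) := by
        gcongr
        exact (linfty_opNorm_mulVec A v).trans (by gcongr)
    _ = Fintype.card ι * ‖A‖ := by ring

theorem norm_shermanMorrison_correction_le (A : Matrix ι ι ℝ) {u v : ι → ℝ} (hu : ‖u‖ ≤ 1)
    (hv : ‖v‖ ≤ 1) (hA : Fintype.card ι * ‖A‖ ≤ 1 / 2) :
    ‖(1 / (1 - u ⬝ᵥ A *ᵥ u)) • (A * vecMulVec u u * A) *ᵥ v‖ ≤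
      2 * Fintype.card ι * ‖A‖ ^ 2 := by
  have hh : |u ⬝ᵥ A *ᵥ u| ≤ 1 / 2 := (abs_dotProduct_mulVec_le A hu hu).trans hA
  have hh' := le_abs_self (u ⬝ᵥ A *ᵥ u)
  have hc : ‖1 / (1 - u ⬝ᵥ A *ᵥ u)‖ ≤ 2 := by
    rw [Real.norm_eq_abs, abs_div, abs_one, abs_of_pos (by linarith), div_le_iff₀ (by linarith)]
    linarith
  rw [mul_vecMulVec_mul_mulVec, norm_smul, norm_smul, Real.norm_eq_abs (u ⬝ᵥ A *ᵥ v)]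
  calc ‖1 / (1 - u ⬝ᵥ A *ᵥ u)‖ * (|u ⬝ᵥ A *ᵥ v| * ‖A *ᵥ u‖)
      ≤ 2 * (Fintype.card ι * ‖A‖ * (‖A‖ * 1)) := by
        gcongr
        · exact abs_dotProduct_mulVec_le A hu hv
        · exact (linfty_opNorm_mulVec A u).trans (by gcongr)
    _ = 2 * Fintype.card ι * ‖A‖ ^ 2 := by ring

theorem eventually_isUnit_det_and_norm_inv_le [DecidableEq ι] {Γ : ℕ → Matrix ι ι ℝ}
    {Γinf : Matrix ι ι ℝ} (hlim : Tendsto (fun n : ℕ => ((n : ℝ)⁻¹) • Γ n) atTop (𝓝 Γinf))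
    (hdet : IsUnit Γinf.det) :
    ∃ K : ℝ, ∀ᶠ n : ℕ in atTop, IsUnit (Γ n).det ∧ ‖(Γ n)⁻¹‖ ≤ K / n := by
  have hinv : Tendsto (fun n : ℕ => ((n : ℝ)⁻¹ • Γ n)⁻¹) atTop (𝓝 Γinf⁻¹) := by
    refine (continuousAt_matrix_inv _ ?_).tendsto.comp hlim
    rw [Ring.inverse_eq_inv']
    exact continuousAt_inv₀ hdet.ne_zero
  have hdet' : ∀ᶠ n : ℕ in atTop, IsUnit ((n : ℝ)⁻¹ • Γ n).det :=
    ((continuous_id.matrix_det.tendsto _).comp hlim).eventually (Units.isOpen.mem_nhds hdet)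
  refine ⟨‖Γinf⁻¹‖ + 1, ?_⟩
  filter_upwards [hdet', hinv.norm.eventually (gt_mem_nhds (lt_add_one _)), eventually_gt_atTop 0]
    with n hU hbound hn
  have hn' : (0 : ℝ) < n := by exact_mod_cast hn
  have hU' : IsUnit (Γ n).det := by
    rw [det_smul] at hU
    exact isUnit_of_mul_isUnit_right hU
  have hsmul : ((n : ℝ)⁻¹ • Γ n)⁻¹ = (n : ℝ) • (Γ n)⁻¹ := by
    refine inv_eq_right_inv ?_
    rw [Matrix.smul_mul, Matrix.mul_smul, smul_smul, inv_mul_cancel₀ hn'.ne', one_smul,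
      mul_nonsing_inv _ hU']
  rw [hsmul, norm_smul, Real.norm_natCast] at hbound
  refine ⟨hU', ?_⟩
  rw [le_div_iff₀ hn']
  linarith

end linftyOpNorm

end Matrix

noncomputable def minimaxWeights {m ι 𝕜 : Type*} [Fintype m] [Fintype ι] [DecidableEq ι]
    [Field 𝕜] (P : Matrix m ι 𝕜) : Matrix m ι 𝕜 :=
  P * (Pᵀ * P)⁻¹

theorem minimaxWeights_updateRow_zero_sub {m ι 𝕜 : Type*} [Fintype m] [DecidableEq m]
    [Fintype ι] [DecidableEq ι] [Field 𝕜] {P : Matrix m ι 𝕜} {i j : m} (hij : i ≠ j)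
    (hP : IsUnit (Pᵀ * P).det) (hh : P i ⬝ᵥ (Pᵀ * P)⁻¹ *ᵥ P i ≠ 1) :
    minimaxWeights (updateRow P i 0) j - minimaxWeights P j =
      (1 / (1 - P i ⬝ᵥ (Pᵀ * P)⁻¹ *ᵥ P i)) •
        ((Pᵀ * P)⁻¹ * vecMulVec (P i) (P i) * (Pᵀ * P)⁻¹) *ᵥ P j := by
  have hsymm : ((Pᵀ * P)⁻¹ * vecMulVec (P i) (P i) * (Pᵀ * P)⁻¹)ᵀ =
      (Pᵀ * P)⁻¹ * vecMulVec (P i) (P i) * (Pᵀ * P)⁻¹ := by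
    have hG : (Pᵀ * P)⁻¹ᵀ = (Pᵀ * P)⁻¹ := by
      rw [transpose_nonsing_inv, transpose_mul, transpose_transpose]
    rw [transpose_mul, transpose_mul, transpose_vecMulVec, hG, Matrix.mul_assoc]
  rw [minimaxWeights, minimaxWeights, transpose_updateRow_zero_mul_self,
    inv_sub_vecMulVec _ _ _ hP hh, mul_apply_eq_vecMul, mul_apply_eq_vecMul,
    updateRow_ne hij.symm, vecMul_add, add_sub_cancel_left, vecMul_smul, ← mulVec_transpose,
    hsymm]

open scoped Matrix.Norms.Operator

theorem norm_minimaxWeights_updateRow_zero_sub_le {m ι : Type*} [Fintype m] [DecidableEq m]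
    [Fintype ι] [DecidableEq ι] {P : Matrix m ι ℝ} {i j : m} {ε : ℝ} (hij : i ≠ j)
    (hP : IsUnit (Pᵀ * P).det) (hi : ‖P i‖ ≤ 1) (hj : ‖P j‖ ≤ 1) (hinv : ‖(Pᵀ * P)⁻¹‖ ≤ ε)
    (hε : Fintype.card ι * ε ≤ 1 / 2) :
    ‖minimaxWeights (updateRow P i 0) j - minimaxWeights P j‖ ≤ 2 * Fintype.card ι * ε ^ 2 := by
  have hsmall : Fintype.card ι * ‖(Pᵀ * P)⁻¹‖ ≤ 1 / 2 := le_trans (by gcongr) hε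
  have hh : P i ⬝ᵥ (Pᵀ * P)⁻¹ *ᵥ P i ≠ 1 := fun h1 => by
    have := (abs_dotProduct_mulVec_le _ hi hi).trans hsmall
    rw [h1] at this
    norm_num at this
  rw [minimaxWeights_updateRow_zero_sub hij hP hh]
  exact (norm_shermanMorrison_correction_le _ hi hj hsmall).trans (by gcongr)

/-- Lemma 1(2): the leave-one-out perturbation of the minimax weights is
uniformly `O(n⁻²)`; moreover the difference of weights is given by the
Sherman–Morrison correction `(1/(1−h_i)) Γ⁻¹ p_i p_iᵀ Γ⁻¹ p_j`. -/
theorem minimax_weights_leave_one_out_O_inv_n_sq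
    {M : ℕ} (p : (n : ℕ) → Matrix (Fin n) (Fin M) ℝ)
    (hp : ∀ n j m, p n j m ∈ Set.Icc (0 : ℝ) 1)
    (Γ : (n : ℕ) → Matrix (Fin M) (Fin M) ℝ) (hΓ : ∀ n, Γ n = (p n)ᵀ * p n)
    (Γim : (n : ℕ) → Fin n → Matrix (Fin M) (Fin M) ℝ)
    (hΓim : ∀ n i, Γim n i = (updateRow (p n) i 0)ᵀ * updateRow (p n) i 0)
    (a : (n : ℕ) → Matrix (Fin n) (Fin M) ℝ) (ha : ∀ n, a n = p n * (Γ n)⁻¹)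
    (aim : (n : ℕ) → Fin n → Matrix (Fin n) (Fin M) ℝ)
    (haim : ∀ n i, aim n i = updateRow (p n) i 0 * (Γim n i)⁻¹)
    (Γinf : Matrix (Fin M) (Fin M) ℝ)
    (hlim : Tendsto (fun n : ℕ => ((n : ℝ)⁻¹) • Γ n) atTop (𝓝 Γinf))
    (hdet : 0 < Γinf.det) :
    (∃ C : ℝ, ∀ᶠ n in atTop, ∀ (i j : Fin n) (m : Fin M), i ≠ j →
        |a n j m - aim n i j m| ≤ C / (n : ℝ) ^ 2) ∧
      ∀ (n : ℕ) (i j : Fin n), i ≠ j → IsUnit (Γ n).det →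
        IsUnit (Γim n i).det →
        (p n i ⬝ᵥ (Γ n)⁻¹.mulVec (p n i)) ≠ 1 →
        (fun m => aim n i j m - a n j m) =
          (1 / (1 - p n i ⬝ᵥ (Γ n)⁻¹.mulVec (p n i))) •
            ((Γ n)⁻¹ * vecMulVec (p n i) (p n i) * (Γ n)⁻¹).mulVec (p n j) := by
  obtain rfl : Γ = fun n => (p n)ᵀ * p n := funext hΓ
  obtain rfl : Γim = fun n i => (updateRow (p n) i 0)ᵀ * updateRow (p n) i 0 :=
    funext fun n => funext (hΓim n)
  obtain rfl : a = fun n => minimaxWeights (p n) := funext ha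
  obtain rfl : aim = fun n i => minimaxWeights (updateRow (p n) i 0) :=
    funext fun n => funext (haim n)
  refine ⟨?_, fun n i j hij hU _ hh => minimaxWeights_updateRow_zero_sub hij hU hh⟩
  have hrow : ∀ n (j : Fin n), ‖p n j‖ ≤ 1 := fun n j =>
    pi_norm_le_iff_of_nonneg zero_le_one |>.mpr fun m =>
      abs_le.mpr ⟨by linarith [(hp n j m).1], (hp n j m).2⟩
  obtain ⟨K, hK⟩ := eventually_isUnit_det_and_norm_inv_le hlim hdet.ne'.isUnit
  refine ⟨2 * M * K ^ 2, ?_⟩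
  filter_upwards [hK, tendsto_natCast_atTop_atTop.eventually_ge_atTop (2 * M * K),
    eventually_gt_atTop 0] with n ⟨hU, hinv⟩ hnK hn i j m hij
  have hε : Fintype.card (Fin M) * (K / n) ≤ 1 / 2 := by
    rw [Fintype.card_fin, ← mul_div_assoc, div_le_iff₀ (by exact_mod_cast hn)]
    linarith
  calc |minimaxWeights (p n) j m - minimaxWeights (updateRow (p n) i 0) j m|
      ≤ ‖minimaxWeights (updateRow (p n) i 0) j - minimaxWeights (p n) j‖ := by
        rw [abs_sub_comm]
        exact norm_le_pi_norm
          (minimaxWeights (updateRow (p n) i 0) j - minimaxWeights (p n) j) m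
    _ ≤ 2 * Fintype.card (Fin M) * (K / n) ^ 2 :=
        norm_minimaxWeights_updateRow_zero_sub_le hij hU (hrow n i) (hrow n j) hinv hε
    _ = 2 * M * K ^ 2 / (n : ℝ) ^ 2 := by rw [Fintype.card_fin]; ring
end

section
/- Let ξ_1,...,ξ_n be independent R^d-valued observations from the mixture model P(ξ_j ∈ A) = Σ_m p_j^{(m)} F^{(m)}(A), with component means μ^{(m)} = 0 for all m, component second moments satisfying E^{(m)}[ξ² |log|ξ||^{1+δ}] < ∞ for some δ > 0, and concentration Gram matrices with (1/n)Γ_{;n} → Γ_∞, det Γ_∞ > 0. Let ξ̄^{(k)} = Σ_j a_j^{(k)} ξ_j with minimax weights a = p Γ^{-1}. Then there exists C < ∞ such that P( |ξ̄^{(k)}| > C √(log log n / n) ) → 0 as n → ∞. -/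
open MeasureTheory ProbabilityTheory Matrix Filter
open scoped BigOperators Topology ENNReal

/-! Since `n⁻¹ Γₙ → Γ∞` with `Γ∞` invertible, the minimax weights are `O(1/n)` uniformly in `j`.
The logarithmic moment condition gives finite second moments, so each coordinate of the weighted
sum is a sum of independent centred square-integrable variables and `E‖ξ̄‖² = O(1/n)`.
Chebyshev's inequality then bounds the probability in question by `O(1 / log log n)`, so `C = 1`
already works. -/

theorem Matrix.inv_smul₀ {n K : Type*} [Fintype n] [DecidableEq n] [Field K] (c : K)
    (A : Matrix n n K) : (c • A)⁻¹ = c⁻¹ • A⁻¹ := by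
  rcases eq_or_ne c 0 with rfl | hc
  · simp
  by_cases hA : IsUnit A.det
  · exact inv_smul' _ (Units.mk0 c hc) hA
  · have hcA : ¬IsUnit (c • A).det := by
      rwa [det_smul, IsUnit.mul_iff, not_and_or, or_iff_right (not_not.2 ((Ne.isUnit hc).pow _))]
    rw [nonsing_inv_apply_not_isUnit _ hcA, nonsing_inv_apply_not_isUnit _ hA, smul_zero]

theorem Matrix.abs_mulVec_apply_le {m n : Type*} [Fintype n] (A : Matrix m n ℝ) {v : n → ℝ}
    (hv : ∀ j, |v j| ≤ 1) (i : m) : |(A *ᵥ v) i| ≤ ∑ j, |A i j| :=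
  calc |(A *ᵥ v) i| = |∑ j, A i j * v j| := rfl
    _ ≤ ∑ j, |A i j * v j| := Finset.abs_sum_le_sum_abs _ _
    _ ≤ ∑ j, |A i j| := Finset.sum_le_sum fun j _ => by
        rw [abs_mul]; exact mul_le_of_le_one_right (abs_nonneg _) (hv j)

theorem exists_eventually_abs_inv_mulVec_apply_le {ι : Type*} [Fintype ι] [DecidableEq ι]
    {Γ : ℕ → Matrix ι ι ℝ} {Γinf : Matrix ι ι ℝ}
    (hlim : Tendsto (fun n : ℕ => (n : ℝ)⁻¹ • Γ n) atTop (𝓝 Γinf)) (hdet : Γinf.det ≠ 0)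
    (k : ι) : ∃ B : ℝ, ∀ᶠ n : ℕ in atTop, ∀ v : ι → ℝ, (∀ m, |v m| ≤ 1) →
      |((Γ n)⁻¹ *ᵥ v) k| ≤ B / n := by
  have hinv : Tendsto (fun n : ℕ => ((n : ℝ)⁻¹ • Γ n)⁻¹) atTop (𝓝 Γinf⁻¹) := by
    refine (continuousAt_matrix_inv _ ?_).tendsto.comp hlim
    rw [Ring.inverse_eq_inv']
    exact continuousAt_inv₀ hdet
  have hrow : Tendsto (fun n : ℕ => ∑ m, |((n : ℝ)⁻¹ • Γ n)⁻¹ k m|) atTop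
      (𝓝 (∑ m, |Γinf⁻¹ k m|)) :=
    tendsto_finsetSum _ fun m _ =>
      ((continuous_abs.comp (continuous_id.matrix_elem k m)).tendsto _).comp hinv
  refine ⟨∑ m, |Γinf⁻¹ k m| + 1, ?_⟩
  filter_upwards [hrow.eventually_lt_const (lt_add_one _), eventually_gt_atTop 0]
    with n hn hn0 v hv
  have hΓ : Γ n = (n : ℝ) • ((n : ℝ)⁻¹ • Γ n) := by
    rw [smul_smul, mul_inv_cancel₀ (by positivity), one_smul]
  rw [hΓ, inv_smul₀, smul_mulVec, Pi.smul_apply, smul_eq_mul, abs_mul,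
    abs_inv, Nat.abs_cast, div_eq_inv_mul]
  exact mul_le_mul_of_nonneg_left ((abs_mulVec_apply_le _ hv k).trans hn.le) (by positivity)

theorem integrable_norm_sq_of_integrable_norm_sq_mul_abs_log_rpow {E : Type*}
    [NormedAddCommGroup E] [MeasurableSpace E] [OpensMeasurableSpace E]
    {μ : Measure E} [IsFiniteMeasure μ] {r : ℝ} (hr : 0 ≤ r)
    (h : Integrable (fun x : E => ‖x‖ ^ 2 * |Real.log ‖x‖| ^ r) μ) :
    Integrable (fun x : E => ‖x‖ ^ 2) μ := by
  refine ((integrable_const (Real.exp 1 ^ 2)).add h).mono'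
    (continuous_norm.pow 2).aestronglyMeasurable (Eventually.of_forall fun x => ?_)
  rw [Real.norm_eq_abs, abs_of_nonneg (by positivity), Pi.add_apply]
  rcases le_or_gt ‖x‖ (Real.exp 1) with hx | hx
  · have : ‖x‖ ^ 2 ≤ Real.exp 1 ^ 2 := by gcongr
    linarith [show 0 ≤ ‖x‖ ^ 2 * |Real.log ‖x‖| ^ r by positivity]
  · have hlog : 1 ≤ |Real.log ‖x‖| :=
      ((Real.lt_log_iff_exp_lt ((Real.exp_pos 1).trans hx)).2 hx).le.trans (le_abs_self _)
    have : ‖x‖ ^ 2 ≤ ‖x‖ ^ 2 * |Real.log ‖x‖| ^ r :=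
      le_mul_of_one_le_right (by positivity) (Real.one_le_rpow hlog hr)
    linarith [sq_nonneg (Real.exp 1)]

theorem pi_norm_sq_le_sum_sq {κ : Type*} [Fintype κ] (v : κ → ℝ) : ‖v‖ ^ 2 ≤ ∑ i, v i ^ 2 := by
  have hsum : 0 ≤ ∑ i, v i ^ 2 := Finset.sum_nonneg fun i _ => sq_nonneg (v i)
  have : ‖v‖ ≤ √(∑ i, v i ^ 2) := (pi_norm_le_iff_of_nonneg (Real.sqrt_nonneg _)).2 fun i =>
    Real.abs_le_sqrt (Finset.single_le_sum (fun j _ => sq_nonneg (v j)) (Finset.mem_univ i))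
  calc ‖v‖ ^ 2 ≤ √(∑ i, v i ^ 2) ^ 2 := by gcongr
    _ = ∑ i, v i ^ 2 := Real.sq_sqrt hsum

section Independent

variable {Ω ι : Type*} [MeasurableSpace Ω] {P : Measure Ω} [IsProbabilityMeasure P]

theorem integral_sq_sum_eq_sum_integral_sq {X : ι → Ω → ℝ} {s : Finset ι}
    (hX : ∀ i ∈ s, MemLp (X i) 2 P) (hind : Set.Pairwise s fun i j => X i ⟂ᵢ[P] X j)
    (h0 : ∀ i ∈ s, ∫ ω, X i ω ∂P = 0) :
    ∫ ω, (∑ i ∈ s, X i ω) ^ 2 ∂P = ∑ i ∈ s, ∫ ω, X i ω ^ 2 ∂P := by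
  have hsum0 : ∫ ω, (∑ i ∈ s, X i) ω ∂P = 0 := by
    simp only [Finset.sum_apply]
    rw [integral_finsetSum _ fun i hi => (hX i hi).integrable one_le_two]
    exact Finset.sum_eq_zero h0
  have hvar := IndepFun.variance_sum hX hind
  rw [variance_of_integral_eq_zero (memLp_finsetSum' s hX).aestronglyMeasurable.aemeasurable
    hsum0, Finset.sum_congr rfl fun i hi => variance_of_integral_eq_zero
    (hX i hi).aestronglyMeasurable.aemeasurable (h0 i hi)] at hvar
  simpa only [Finset.sum_apply] using hvar

theorem integral_norm_sq_sum_smul_le {κ : Type*} [Fintype κ] {X : ι → Ω → (κ → ℝ)}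
    (hX : ∀ i, MemLp (X i) 2 P) (hind : Pairwise fun i j => X i ⟂ᵢ[P] X j)
    (h0 : ∀ i, ∫ ω, X i ω ∂P = 0) (a : ι → ℝ) (s : Finset ι) :
    ∫ ω, ‖∑ i ∈ s, a i • X i ω‖ ^ 2 ∂P ≤
      Fintype.card κ * ∑ i ∈ s, a i ^ 2 * ∫ ω, ‖X i ω‖ ^ 2 ∂P := by
  have hXk : ∀ i k, MemLp (fun ω => a i * X i ω k) 2 P := fun i k =>
    ((hX i).eval k).const_mul (a i)
  have hcoord : ∀ k, ∫ ω, (∑ i ∈ s, a i * X i ω k) ^ 2 ∂P =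
      ∑ i ∈ s, a i ^ 2 * ∫ ω, X i ω k ^ 2 ∂P := by
    intro k
    rw [integral_sq_sum_eq_sum_integral_sq (fun i _ => hXk i k)
      (fun i _ j _ hij => (hind hij).comp ((measurable_pi_apply k).const_mul (a i))
        ((measurable_pi_apply k).const_mul (a j)) :)
      (fun i _ => by rw [integral_const_mul, ← eval_integral
        (fun k => ((hX i).eval k).integrable one_le_two), h0 i, Pi.zero_apply, mul_zero])]
    simp only [mul_pow, integral_const_mul]
  calc ∫ ω, ‖∑ i ∈ s, a i • X i ω‖ ^ 2 ∂P
      ≤ ∫ ω, ∑ k, (∑ i ∈ s, a i * X i ω k) ^ 2 ∂P := by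
        refine integral_mono
          ((memLp_finsetSum s fun i _ => (hX i).const_smul (a i)).integrable_norm_pow two_ne_zero)
          (integrable_finsetSum _ fun k _ => (memLp_finsetSum s fun i _ => hXk i k).integrable_sq)
          fun ω => ?_
        simpa only [Finset.sum_apply, Pi.smul_apply, smul_eq_mul]
          using pi_norm_sq_le_sum_sq (∑ i ∈ s, a i • X i ω)
    _ = ∑ k, ∑ i ∈ s, a i ^ 2 * ∫ ω, X i ω k ^ 2 ∂P := by
        rw [integral_finsetSum _ fun k _ =>
          (memLp_finsetSum s fun i _ => hXk i k).integrable_sq]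
        exact Finset.sum_congr rfl fun k _ => hcoord k
    _ ≤ ∑ _k : κ, ∑ i ∈ s, a i ^ 2 * ∫ ω, ‖X i ω‖ ^ 2 ∂P := by
        refine Finset.sum_le_sum fun k _ => Finset.sum_le_sum fun i _ =>
          mul_le_mul_of_nonneg_left (integral_mono (((hX i).eval k).integrable_sq)
          ((hX i).integrable_norm_pow two_ne_zero) fun ω => ?_) (sq_nonneg _)
        simpa only [Real.norm_eq_abs, sq_abs] using
          pow_le_pow_left₀ (norm_nonneg _) (norm_le_pi_norm (X i ω) k) 2
    _ = _ := by rw [Finset.sum_const, Finset.card_univ, nsmul_eq_mul]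

theorem integral_norm_sq_sum_smul_le_of_abs_le {κ : Type*} [Fintype κ] {X : ι → Ω → (κ → ℝ)}
    (hX : ∀ i, MemLp (X i) 2 P) (hind : Pairwise fun i j => X i ⟂ᵢ[P] X j)
    (h0 : ∀ i, ∫ ω, X i ω ∂P = 0) {σ2 : ℝ} (hσ2 : ∀ i, ∫ ω, ‖X i ω‖ ^ 2 ∂P ≤ σ2)
    {a : ι → ℝ} {s : Finset ι} {c : ℝ} (ha : ∀ i ∈ s, |a i| ≤ c) :
    ∫ ω, ‖∑ i ∈ s, a i • X i ω‖ ^ 2 ∂P ≤ Fintype.card κ * (s.card * c ^ 2 * σ2) := by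
  refine (integral_norm_sq_sum_smul_le hX hind h0 a s).trans ?_
  have hsum : ∑ i ∈ s, a i ^ 2 * ∫ ω, ‖X i ω‖ ^ 2 ∂P ≤ ∑ _i ∈ s, c ^ 2 * σ2 :=
    Finset.sum_le_sum fun i hi => mul_le_mul (sq_le_sq' (abs_le.1 (ha i hi)).1
      (abs_le.1 (ha i hi)).2) (hσ2 i) (integral_nonneg fun ω => sq_nonneg _) (sq_nonneg _)
  rw [Finset.sum_const, nsmul_eq_mul, ← mul_assoc] at hsum
  exact mul_le_mul_of_nonneg_left hsum (Nat.cast_nonneg _)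

end Independent

section Mixture

variable {X E ι : Type*} [MeasurableSpace X] [NormedAddCommGroup E] [Fintype ι]
  {F : ι → Measure X} {g : X → E}

theorem integrable_sum_ofReal_smul_measure (p : ι → ℝ) (hg : ∀ m, Integrable g (F m)) :
    Integrable g (∑ m, ENNReal.ofReal (p m) • F m) :=
  integrable_finsetSum_measure.2 fun m _ => (hg m).smul_measure ENNReal.ofReal_ne_top

theorem integral_sum_ofReal_smul_measure [NormedSpace ℝ E] {p : ι → ℝ} (hp : ∀ m, 0 ≤ p m)
    (hg : ∀ m, Integrable g (F m)) :
    ∫ x, g x ∂(∑ m, ENNReal.ofReal (p m) • F m) = ∑ m, p m • ∫ x, g x ∂(F m) := by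
  rw [integral_finsetSum_measure fun m _ => (hg m).smul_measure ENNReal.ofReal_ne_top]
  simp only [integral_smul_measure, ENNReal.toReal_ofReal (hp _)]

end Mixture

section MixtureLaw

variable {Ω E ι : Type*} [MeasurableSpace Ω] {P : Measure Ω} [NormedAddCommGroup E]
  [MeasurableSpace E] [OpensMeasurableSpace E] [Fintype ι] {F : ι → Measure E} {p : ι → ℝ}
  {ξ : Ω → E}

theorem memLp_two_of_map_eq_mixture [SecondCountableTopology E] (hξ : AEMeasurable ξ P)
    (hlaw : P.map ξ = ∑ m, ENNReal.ofReal (p m) • F m)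
    (hF : ∀ m, Integrable (fun x => ‖x‖ ^ 2) (F m)) : MemLp ξ 2 P := by
  have : MemLp id 2 (P.map ξ) := by
    rw [memLp_two_iff_integrable_sq_norm aestronglyMeasurable_id, hlaw]
    exact integrable_sum_ofReal_smul_measure p hF
  exact this.comp_of_map hξ

theorem integral_norm_sq_le_of_map_eq_mixture (hξ : AEMeasurable ξ P)
    (hlaw : P.map ξ = ∑ m, ENNReal.ofReal (p m) • F m) (hp : ∀ m, p m ∈ Set.Icc (0 : ℝ) 1)
    (hF : ∀ m, Integrable (fun x => ‖x‖ ^ 2) (F m)) :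
    ∫ ω, ‖ξ ω‖ ^ 2 ∂P ≤ ∑ m, ∫ x, ‖x‖ ^ 2 ∂(F m) := by
  rw [← integral_map (f := fun x => ‖x‖ ^ 2) hξ (continuous_norm.pow 2).aestronglyMeasurable,
    hlaw, integral_sum_ofReal_smul_measure (fun m => (hp m).1) hF]
  exact Finset.sum_le_sum fun m _ =>
    mul_le_of_le_one_left (integral_nonneg fun x => sq_nonneg _) (hp m).2

theorem integral_eq_zero_of_map_eq_mixture [SecondCountableTopology E] [NormedSpace ℝ E]
    [CompleteSpace E] [∀ m, IsFiniteMeasure (F m)] (hξ : AEMeasurable ξ P)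
    (hlaw : P.map ξ = ∑ m, ENNReal.ofReal (p m) • F m) (hp : ∀ m, 0 ≤ p m)
    (hF : ∀ m, Integrable (fun x => ‖x‖ ^ 2) (F m)) (hcent : ∀ m, ∫ x, x ∂(F m) = 0) :
    ∫ ω, ξ ω ∂P = 0 := by
  have hint : ∀ m, Integrable (fun x => x) (F m) := fun m =>
    ((memLp_two_iff_integrable_sq_norm aestronglyMeasurable_id).2 (hF m)).integrable one_le_two
  rw [← integral_map (f := fun x => x) hξ aestronglyMeasurable_id, hlaw,
    integral_sum_ofReal_smul_measure hp hint]
  simp [hcent]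

end MixtureLaw

theorem measure_lt_norm_le_ofReal_integral_sq_div {Ω E : Type*} [MeasurableSpace Ω]
    {P : Measure Ω} [IsFiniteMeasure P] [NormedAddCommGroup E] {Y : Ω → E} (hY : MemLp Y 2 P)
    {t : ℝ} (ht : 0 < t) : P {ω | t < ‖Y ω‖} ≤ ENNReal.ofReal ((∫ ω, ‖Y ω‖ ^ 2 ∂P) / t ^ 2) := by
  have hmarkov := mul_meas_ge_le_integral_of_nonneg
    (Eventually.of_forall fun ω => sq_nonneg ‖Y ω‖) (hY.integrable_norm_pow two_ne_zero) (t ^ 2)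
  have hsub : {ω | t < ‖Y ω‖} ⊆ {ω | t ^ 2 ≤ ‖Y ω‖ ^ 2} := fun ω hω =>
    pow_le_pow_left₀ ht.le (le_of_lt hω) 2
  calc P {ω | t < ‖Y ω‖} ≤ P {ω | t ^ 2 ≤ ‖Y ω‖ ^ 2} := measure_mono hsub
    _ = ENNReal.ofReal (P.real {ω | t ^ 2 ≤ ‖Y ω‖ ^ 2}) :=
        (ofReal_measureReal (measure_ne_top P _)).symm
    _ ≤ _ := ENNReal.ofReal_le_ofReal ((le_div_iff₀' (by positivity)).2 hmarkov)

theorem tendsto_measure_lt_norm_of_integral_sq_le {Ω E : Type*} [MeasurableSpace Ω]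
    {P : Measure Ω} [IsFiniteMeasure P] [NormedAddCommGroup E] {l : Filter ℕ}
    {Y : ℕ → Ω → E} {t ε : ℕ → ℝ} (hY : ∀ n, MemLp (Y n) 2 P) (ht : ∀ᶠ n in l, 0 < t n)
    (hε : ∀ᶠ n in l, ∫ ω, ‖Y n ω‖ ^ 2 ∂P ≤ ε n)
    (hlim : Tendsto (fun n => ε n / t n ^ 2) l (𝓝 0)) :
    Tendsto (fun n => P {ω | t n < ‖Y n ω‖}) l (𝓝 0) := by
  refine tendsto_of_tendsto_of_tendsto_of_le_of_le' tendsto_const_nhds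
    (by simpa using ENNReal.tendsto_ofReal hlim) (Eventually.of_forall fun n => bot_le) ?_
  filter_upwards [ht, hε] with n htn hεn
  exact (measure_lt_norm_le_ofReal_integral_sq_div (hY n) htn).trans
    (ENNReal.ofReal_le_ofReal (by gcongr))

theorem tendsto_measure_mul_sqrt_log_log_div_lt_norm {Ω E : Type*} [MeasurableSpace Ω]
    {P : Measure Ω} [IsFiniteMeasure P] [NormedAddCommGroup E] {Y : ℕ → Ω → E}
    (hY : ∀ n, MemLp (Y n) 2 P) {K : ℝ} (hK : ∀ᶠ n : ℕ in atTop, ∫ ω, ‖Y n ω‖ ^ 2 ∂P ≤ K / n)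
    {C : ℝ} (hC : 0 < C) :
    Tendsto (fun n : ℕ => P {ω | C * √(Real.log (Real.log n) / n) < ‖Y n ω‖}) atTop (𝓝 0) := by
  have hloglog : Tendsto (fun n : ℕ => Real.log (Real.log n)) atTop atTop :=
    Real.tendsto_log_atTop.comp (Real.tendsto_log_atTop.comp tendsto_natCast_atTop_atTop)
  have hrate : ∀ᶠ n : ℕ in atTop, 0 < Real.log (Real.log n) / n := by
    filter_upwards [hloglog.eventually_gt_atTop 0, eventually_gt_atTop 0] with n hL hn
    exact div_pos hL (Nat.cast_pos.2 hn)
  refine tendsto_measure_lt_norm_of_integral_sq_le hY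
    (hrate.mono fun n hn => mul_pos hC (Real.sqrt_pos.2 hn)) hK ?_
  refine ((tendsto_const_nhds (x := K / C ^ 2)).div_atTop hloglog).congr' ?_
  filter_upwards [hrate, eventually_gt_atTop 0] with n hn hn0
  rw [mul_pow, Real.sq_sqrt hn.le]
  field_simp

theorem weighted_mean_LIL_rate_general
    {Ω : Type*} [MeasurableSpace Ω] (P : Measure Ω) [IsProbabilityMeasure P]
    {d M : ℕ}
    (ξ : ℕ → Ω → (Fin d → ℝ)) (hmeas : ∀ j, Measurable (ξ j))
    (hindep : iIndepFun ξ P)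
    (pc : ℕ → Fin M → ℝ)
    (hpc : ∀ j m, pc j m ∈ Set.Icc (0 : ℝ) 1)
    (F : Fin M → Measure (Fin d → ℝ)) (hF : ∀ m, IsProbabilityMeasure (F m))
    (hlaw : ∀ j, Measure.map (ξ j) P = ∑ m, ENNReal.ofReal (pc j m) • F m)
    (hcent : ∀ m, ∫ x, x ∂(F m) = 0)
    (δ : ℝ) (hδ : 0 < δ)
    (hlogmom : ∀ m, Integrable
      (fun x : Fin d → ℝ => ‖x‖ ^ 2 * abs (Real.log ‖x‖) ^ (1 + δ)) (F m))
    (Γ : ℕ → Matrix (Fin M) (Fin M) ℝ)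
    (Γinf : Matrix (Fin M) (Fin M) ℝ)
    (hlim : Tendsto (fun n : ℕ => ((n : ℝ)⁻¹) • Γ n) atTop (𝓝 Γinf))
    (hdet : 0 < Γinf.det) (k : Fin M) :
    ∃ C : ℝ, Tendsto
      (fun n : ℕ => P {ω |
        C * Real.sqrt (Real.log (Real.log n) / n) <
          ‖∑ j ∈ Finset.range n, ((Γ n)⁻¹.mulVec (pc j)) k • ξ j ω‖})
      atTop (𝓝 0) := by
  obtain ⟨B, hB⟩ := exists_eventually_abs_inv_mulVec_apply_le hlim hdet.ne' k
  have hF2 : ∀ m, Integrable (fun x => ‖x‖ ^ 2) (F m) := fun m =>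
    integrable_norm_sq_of_integrable_norm_sq_mul_abs_log_rpow (by linarith) (hlogmom m)
  have hξL2 : ∀ j, MemLp (ξ j) 2 P := fun j =>
    memLp_two_of_map_eq_mixture (hmeas j).aemeasurable (hlaw j) hF2
  have hmean : ∀ j, ∫ ω, ξ j ω ∂P = 0 := fun j =>
    integral_eq_zero_of_map_eq_mixture (hmeas j).aemeasurable (hlaw j) (fun m => (hpc j m).1)
      hF2 hcent
  have hσ2 : ∀ j, ∫ ω, ‖ξ j ω‖ ^ 2 ∂P ≤ ∑ m, ∫ x, ‖x‖ ^ 2 ∂(F m) := fun j =>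
    integral_norm_sq_le_of_map_eq_mixture (hmeas j).aemeasurable (hlaw j) (hpc j) hF2
  have hpc_abs : ∀ j m, |pc j m| ≤ 1 := fun j m =>
    abs_le.2 ⟨by linarith [(hpc j m).1], (hpc j m).2⟩
  refine ⟨1, tendsto_measure_mul_sqrt_log_log_div_lt_norm (fun n => ?_)
    (K := d * B ^ 2 * ∑ m, ∫ x, ‖x‖ ^ 2 ∂(F m)) ?_ one_pos⟩
  · exact memLp_finsetSum _ fun j _ => (hξL2 j).const_smul (((Γ n)⁻¹ *ᵥ pc j) k)
  filter_upwards [hB] with n hn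
  calc _ ≤ Fintype.card (Fin d) * ((Finset.range n).card * (B / n) ^ 2 *
        ∑ m, ∫ x, ‖x‖ ^ 2 ∂(F m)) :=
        integral_norm_sq_sum_smul_le_of_abs_le hξL2 (fun i j hij => hindep.indepFun hij) hmean
          hσ2 fun j _ => hn _ (hpc_abs j)
    _ = _ := by
        rw [Fintype.card_fin, Finset.card_range]
        field_simp

/-- Lemma 2: LIL-type rate for the minimax-weighted sample mean in the
mixture with varying concentrations model with centered components. -/
theorem weighted_mean_LIL_rate
    {Ω : Type*} [MeasurableSpace Ω] (P : Measure Ω) [IsProbabilityMeasure P]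
    {d M : ℕ}
    (ξ : ℕ → Ω → (Fin d → ℝ)) (hmeas : ∀ j, Measurable (ξ j))
    (hindep : iIndepFun ξ P)
    (pc : ℕ → Fin M → ℝ)
    (hpc : ∀ j m, pc j m ∈ Set.Icc (0 : ℝ) 1) (hpc1 : ∀ j, ∑ m, pc j m = 1)
    (F : Fin M → Measure (Fin d → ℝ)) (hF : ∀ m, IsProbabilityMeasure (F m))
    (hlaw : ∀ j, Measure.map (ξ j) P = ∑ m, ENNReal.ofReal (pc j m) • F m)
    (hcent : ∀ m, ∫ x, x ∂(F m) = 0)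
    (δ : ℝ) (hδ : 0 < δ)
    (hlogmom : ∀ m, Integrable
      (fun x : Fin d → ℝ => ‖x‖ ^ 2 * abs (Real.log ‖x‖) ^ (1 + δ)) (F m))
    (Γ : ℕ → Matrix (Fin M) (Fin M) ℝ)
    (hΓ : ∀ n, Γ n = ∑ j ∈ Finset.range n, vecMulVec (pc j) (pc j))
    (Γinf : Matrix (Fin M) (Fin M) ℝ)
    (hlim : Tendsto (fun n : ℕ => ((n : ℝ)⁻¹) • Γ n) atTop (𝓝 Γinf))
    (hdet : 0 < Γinf.det) (k : Fin M) :
    ∃ C : ℝ, Tendsto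
      (fun n : ℕ => P {ω |
        C * Real.sqrt (Real.log (Real.log n) / n) <
          ‖∑ j ∈ Finset.range n, ((Γ n)⁻¹.mulVec (pc j)) k • ξ j ω‖})
      atTop (𝓝 0) :=
  weighted_mean_LIL_rate_general P ξ hmeas hindep pc hpc F hF hlaw hcent δ hδ hlogmom Γ Γinf hlim
    hdet k
end
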